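/- arXiv:1501.04145 — 9 statements merged into one kernel-verified Lean document; each statement's English description precedes it below -/
import Mathlib

section
/- Let V be a finite-dimensional complex vector space equipped with: (1) a direct sum decomposition V = V_1 ⊕ ... ⊕ V_L; (2) a nilpotent endomorphism N of V which preserves each summand V_i; (3) an increasing filtration by subspaces ... ⊆ F_{j-1} ⊆ F_j ⊆ ... of V such that N(F_j) ⊆ F_{j+1} for all j ∈ ℤ. For 0 ≤ i ≤ L set U_i := V_1 ⊕ ... ⊕ V_i (so U_0 = 0 and U_L = V), let N̄_i : U_i/U_{i-1} → U_i/U_{i-1} be the endomorphism induced by N, and let F̄_j(U_i/U_{i-1}) denote the image of F_j ∩ U_i in U_i/U_{i-1}. Assume that for every i and every j the induced map is strictly compatible with the induced filtration, i.e. N̄_i(U_i/U_{i-1}) ∩ F̄_j(U_i/U_{i-1}) = N̄_i(F̄_{j-1}(U_i/U_{i-1})). Then N is strictly compatible with F, i.e. N(V) ∩ F_j = N(F_{j-1}) for all j ∈ ℤ. -/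
/-- Let `V` be a finite-dimensional complex vector space with a direct sum
decomposition `V = V₁ ⊕ ⋯ ⊕ V_L`, a nilpotent endomorphism `N` preserving each summand, and an
increasing `ℤ`-indexed filtration `F` with `N (F j) ⊆ F (j+1)`.  Let `U i` be the partial sum
`V₁ ⊕ ⋯ ⊕ V_i`.  If for every `i` and `j` the endomorphism induced by `N` on `U (i+1) ⧸ U i` is
strictly compatible with the induced filtration, then `N` is strictly compatible with `F`, i.e.
`range N ⊓ F j = N (F (j-1))` for all `j`. -/
theorem kontsevich_strictness_lemma
    (V : Type*) [AddCommGroup V] [Module ℂ V] [FiniteDimensional ℂ V]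
    (L : ℕ) (Vdec : Fin L → Submodule ℂ V)
    (hdec : DirectSum.IsInternal Vdec)
    (N : V →ₗ[ℂ] V) (hnil : IsNilpotent N)
    (hpres : ∀ i, (Vdec i).map N ≤ Vdec i)
    (F : ℤ → Submodule ℂ V) (hmono : Monotone F)
    (hNF : ∀ j, (F j).map N ≤ F (j + 1))
    (U : ℕ → Submodule ℂ V)
    (hU : ∀ i, U i = ⨆ i' : Fin L, ⨆ _ : (i' : ℕ) < i, Vdec i')
    (hstrict : ∀ i : ℕ, i < L → ∀ j : ℤ,
      Submodule.map ((U i).mkQ ∘ₗ N) (U (i + 1)) ⊓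
          Submodule.map (U i).mkQ (F j ⊓ U (i + 1)) =
        Submodule.map ((U i).mkQ ∘ₗ N) (F (j - 1) ⊓ U (i + 1))) :
    ∀ j : ℤ, LinearMap.range N ⊓ F j = (F (j - 1)).map N := by
  -- N preserves each U i
  have hUinv : ∀ i, (U i).map N ≤ U i := by
    intro i
    rw [hU i, Submodule.map_iSup]
    refine iSup_le fun i' => ?_
    rw [Submodule.map_iSup]
    refine iSup_le fun hi' => ?_
    exact le_trans (hpres i') (le_iSup_of_le i' (le_iSup_of_le hi' le_rfl))
  -- U (i+1) ≤ U i ⊔ Vdec ⟨i, hi⟩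
  have hsup : ∀ i (hi : i < L), U (i + 1) ≤ U i ⊔ Vdec ⟨i, hi⟩ := by
    intro i hi
    rw [hU (i + 1)]
    refine iSup_le fun i' => iSup_le fun hi' => ?_
    rcases Nat.lt_succ_iff_lt_or_eq.mp hi' with h | h
    · exact le_sup_of_le_left (by rw [hU i]; exact le_iSup_of_le i' (le_iSup_of_le h le_rfl))
    · have : i' = ⟨i, hi⟩ := Fin.ext h
      rw [this]; exact le_sup_right
  -- U i disjoint from Vdec ⟨i, hi⟩
  have hdisj : ∀ i (hi : i < L), U i ⊓ Vdec ⟨i, hi⟩ = ⊥ := by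
    intro i hi
    have hind := hdec.submodule_iSupIndep ⟨i, hi⟩
    rw [disjoint_iff] at hind
    rw [← le_bot_iff, ← hind, inf_comm]
    refine inf_le_inf_left _ ?_
    rw [hU i]
    refine iSup_le fun i' => iSup_le fun hi' => ?_
    have hne : i' ≠ ⟨i, hi⟩ := by
      intro h
      rw [h] at hi'
      exact lt_irrefl i hi'
    exact le_iSup_of_le i' (le_iSup_of_le hne le_rfl)
  -- the key induction
  have key : ∀ i, i ≤ L → ∀ j : ℤ,
      Submodule.map N (U i) ⊓ F j = Submodule.map N (F (j - 1) ⊓ U i) := by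
    intro i
    induction i with
    | zero =>
      intro _ j
      have h0 : U 0 = ⊥ := by
        rw [hU 0, eq_bot_iff]
        exact iSup_le fun i' => iSup_le fun hi' => absurd hi' (Nat.not_lt_zero _)
      simp [h0]
    | succ i ih =>
      intro hi1 j
      have hiL : i < L := hi1
      have ih' := ih (le_of_lt hiL)
      apply le_antisymm
      · rintro v ⟨⟨x, hx, rfl⟩, hvF⟩
        -- N x ∈ F j, x ∈ U (i+1)
        have hNxU : N x ∈ U (i + 1) := hUinv (i + 1) ⟨x, hx, rfl⟩
        -- apply strictness on the quotient
        have hq : (U i).mkQ (N x) ∈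
            Submodule.map ((U i).mkQ ∘ₗ N) (F (j - 1) ⊓ U (i + 1)) := by
          rw [← hstrict i hiL j]
          exact ⟨⟨x, hx, rfl⟩, ⟨N x, ⟨hvF, hNxU⟩, rfl⟩⟩
        obtain ⟨y, ⟨hyF, hyU⟩, hyeq⟩ := hq
        -- N (x - y) ∈ U i
        have hdiff : N x - N y ∈ U i := by
          rw [← Submodule.ker_mkQ (U i), LinearMap.mem_ker, map_sub]
          have : (U i).mkQ (N y) = (U i).mkQ (N x) := hyeq
          rw [this, sub_self]
        -- decompose x - y = a + b with a ∈ U i, b ∈ Vdec ⟨i, hiL⟩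
        have hxy : x - y ∈ U i ⊔ Vdec ⟨i, hiL⟩ :=
          hsup i hiL (Submodule.sub_mem _ hx hyU)
        obtain ⟨a, ha, b, hb, hab⟩ := Submodule.mem_sup.mp hxy
        -- N b ∈ U i ⊓ Vdec ⟨i, hiL⟩ = ⊥
        have hNb : N b = 0 := by
          have h1 : N b ∈ Vdec ⟨i, hiL⟩ := hpres _ ⟨b, hb, rfl⟩
          have h2 : N b ∈ U i := by
            have : N a + N b = N x - N y := by rw [← map_add, hab, map_sub]
            have h3 : N a ∈ U i := hUinv i ⟨a, ha, rfl⟩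
            have : N b = (N x - N y) - N a := by rw [← this]; abel
            rw [this]
            exact Submodule.sub_mem _ hdiff h3
          have := hdisj i hiL ▸ (Submodule.mem_inf.mpr ⟨h2, h1⟩)
          simpa using this
        -- N a = N (x - y) ∈ map N (U i) ⊓ F j
        have hNa : N a = N x - N y := by
          have : N a + N b = N x - N y := by rw [← map_add, hab, map_sub]
          rw [← this, hNb, add_zero]
        have hNyF : N y ∈ F j := by
          have := hNF (j - 1) ⟨y, hyF, rfl⟩
          simpa using this
        have hNaF : N a ∈ F j := hNa ▸ Submodule.sub_mem _ hvF hNyF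
        have : N a ∈ Submodule.map N (F (j - 1) ⊓ U i) := by
          rw [← ih' j]
          exact ⟨⟨a, ha, rfl⟩, hNaF⟩
        obtain ⟨z, ⟨hzF, hzU⟩, hzeq⟩ := this
        refine ⟨y + z, ⟨Submodule.add_mem _ hyF hzF,
          Submodule.add_mem _ hyU (hU (i+1) ▸ ?_)⟩, ?_⟩
        · have : U i ≤ U (i + 1) := by
            rw [hU i, hU (i + 1)]
            exact iSup_le fun i' => iSup_le fun hi' =>
              le_iSup_of_le i' (le_iSup_of_le (Nat.lt_succ_of_lt hi') le_rfl)
          exact (hU (i+1)) ▸ this hzU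
        · rw [map_add, hzeq, hNa]; abel
      · rintro v ⟨x, ⟨hxF, hxU⟩, rfl⟩
        exact ⟨⟨x, hxU, rfl⟩, by
          have := hNF (j - 1) ⟨x, hxF, rfl⟩
          simpa using this⟩
  intro j
  have hUL : U L = ⊤ := by
    rw [hU L, eq_top_iff, ← hdec.submodule_iSup_eq_top]
    exact iSup_le fun i' => le_iSup_of_le i' (le_iSup_of_le i'.isLt le_rfl)
  have := key L le_rfl j
  rw [hUL, inf_top_eq] at this
  rw [← this, ← Submodule.map_top, ← hUL]
end

section
/- Suppose the series Σ associated to a finite subset T ⊆ ℤ^ℓ × ℕ and coefficient data (g_{m,j})_{(m,j)∈T} is identically zero, i.e. Σ(b,p) = 0 for all (b,p) ∈ ℤ^ℓ × ℕ. Then: (i) for every m ∈ min(π(T)) and every j ∈ ℕ with (m,j) ∈ T, one has g_{m,j}(0,0) = 0; (ii) for every (m,j) ∈ min(T), one has g_{m,j}(0,0) = 0. -/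
/-- The Laurent-type series (encoded by its coefficient function on `ℤ^ℓ × ℕ`, the value at
`(b, p)` being the coefficient of `x^b (τ x^{-k})^p`) associated to the formal sum
`∑_{(m,j) ∈ T} g_{m,j}(x,τ) · x^m · (τ x^{-k})^j`, where for `(m,j) ∈ T` the function
`g (m,j) : ℕ^ℓ × ℕ → A` records the coefficients of the formal power series `g_{m,j}(x,τ)`. -/
def assocSeries {ℓ : ℕ} {A : Type*} [CommRing A] (k : Fin ℓ → ℕ)
    (T : Finset ((Fin ℓ → ℤ) × ℕ))
    (g : (Fin ℓ → ℤ) × ℕ → ((Fin ℓ → ℕ) × ℕ) → A) :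
    ((Fin ℓ → ℤ) × ℕ) → A := fun bp =>
  ∑ mj ∈ T,
    if mj.2 ≤ bp.2 ∧ ∀ i, mj.1 i + ((bp.2 - mj.2 : ℕ) : ℤ) * (k i : ℤ) ≤ bp.1 i then
      g mj (fun i => (bp.1 i - mj.1 i - ((bp.2 - mj.2 : ℕ) : ℤ) * (k i : ℤ)).toNat,
             bp.2 - mj.2)
    else 0

/-- coefficient form of Lemma 14.5.15.1.  If the series associated to
`(T, g)` vanishes identically then, (i) for every `m` minimal in `π(T)` and every `j` with
`(m,j) ∈ T`, the leading coefficient `g_{m,j}(0,0)` vanishes, and (ii) for every `(m,j)`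
minimal in `T`, the leading coefficient `g_{m,j}(0,0)` vanishes. -/
theorem assocSeries_eq_zero_leading_coeff
    {ℓ₁ ℓ : ℕ} (h1 : 1 ≤ ℓ₁) (h2 : ℓ₁ ≤ ℓ)
    (k : Fin ℓ → ℕ)
    (hk1 : ∀ i : Fin ℓ, (i : ℕ) < ℓ₁ → 0 < k i)
    (hk2 : ∀ i : Fin ℓ, ℓ₁ ≤ (i : ℕ) → k i = 0)
    {A : Type*} [CommRing A]
    (T : Finset ((Fin ℓ → ℤ) × ℕ))
    (g : (Fin ℓ → ℤ) × ℕ → ((Fin ℓ → ℕ) × ℕ) → A)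
    (hzero : ∀ bp, assocSeries k T g bp = 0) :
    (∀ m : Fin ℓ → ℤ, (∃ j, (m, j) ∈ T) →
      (∀ m' : Fin ℓ → ℤ, ∀ j' : ℕ, (m', j') ∈ T → m' ≤ m → m' = m) →
      ∀ j : ℕ, (m, j) ∈ T → g (m, j) (0, 0) = 0) ∧
    (∀ mj ∈ T, (∀ mj' ∈ T, mj' ≤ mj → mj' = mj) → g mj (0, 0) = 0) := by
  
  have hℓ : 0 < ℓ := by omega
  set i0 : Fin ℓ := ⟨0, hℓ⟩ with hi0
  have hki0 : 0 < k i0 := hk1 i0 (by simp [hi0]; omega)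
  have key : ∀ (m : Fin ℓ → ℤ) (j : ℕ), (m, j) ∈ T →
      (∀ mj' ∈ T, mj'.2 ≤ j →
        (∀ i, mj'.1 i + ((j - mj'.2 : ℕ) : ℤ) * (k i : ℤ) ≤ m i) → mj' = (m, j)) →
      g (m, j) (0, 0) = 0 := by
    intro m j hj hcond
    have h := hzero (m, j)
    unfold assocSeries at h
    rw [Finset.sum_eq_single (m, j)] at h
    · rw [if_pos] at h
      · have he : (fun i => ((m, j).1 i - (m, j).1 i - (((m, j).2 - (m, j).2 : ℕ) : ℤ) * (k i : ℤ)).toNat, (m, j).2 - (m, j).2) = ((0 : Fin ℓ → ℕ), 0) := by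
          refine Prod.ext ?_ (by simp)
          funext i
          simp
        rwa [he] at h
      · refine ⟨le_refl _, fun i => ?_⟩
        simp
    · intro mj' hmj' hne
      rw [if_neg]
      rintro ⟨hc1, hc2⟩
      exact hne (hcond mj' hmj' hc1 hc2)
    · intro habs; exact absurd hj habs
  constructor
  · intro m _ hmin j hj
    refine key m j hj ?_
    rintro ⟨m', j'⟩ hmj' hle hle2
    dsimp only at hle hle2
    have hm' : m' ≤ m := by
      intro i
      have ha := hle2 i
      have hb : 0 ≤ ((j - j' : ℕ) : ℤ) * (k i : ℤ) := by positivity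
      show m' i ≤ m i
      linarith
    have hm'm : m' = m := hmin m' j' hmj' hm'
    subst hm'm
    have hi := hle2 i0
    have hjj : ((j - j' : ℕ) : ℤ) * (k i0 : ℤ) ≤ 0 := by omega
    have : (j - j' : ℕ) = 0 := by
      by_contra hne
      have h1 : 0 < ((j - j' : ℕ) : ℤ) := by omega
      have h2 : 0 < (k i0 : ℤ) := by exact_mod_cast hki0
      nlinarith
    have : j' = j := by omega
    simp [this]
  · rintro ⟨m, j⟩ hmj hmin
    refine key m j hmj ?_
    rintro ⟨m', j'⟩ hmj' hle hle2
    dsimp only at hle hle2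
    refine hmin (m', j') hmj' ⟨?_, hle⟩
    intro i
    have ha := hle2 i
    have hb : 0 ≤ ((j - j' : ℕ) : ℤ) * (k i : ℤ) := by positivity
    show m' i ≤ m i
    linarith
end

section
/- Let (T₁, (g¹_{m,j})) and (T₂, (g²_{m,j})) be two primitive expressions whose associated series coincide: Σ₁(b,p) = Σ₂(b,p) for all (b,p) ∈ ℤ^ℓ × ℕ. Then: (i) min(π(T₁)) = min(π(T₂)), and for every m in this common set and every j ∈ ℕ one has (m,j) ∈ T₁ ⟺ (m,j) ∈ T₂, and when both hold g¹_{m,j}(0,0) = g²_{m,j}(0,0); (ii) min(T₁) = min(T₂), and for every (m,j) in this common set g¹_{m,j}(0,0) = g²_{m,j}(0,0). -/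
/-- The set of minimal elements of the projection `π(T) ⊆ ℤ^ℓ` of `T ⊆ ℤ^ℓ × ℕ`,
with respect to the componentwise partial order on `ℤ^ℓ`. -/
def minPi {ℓ : ℕ} (T : Finset ((Fin ℓ → ℤ) × ℕ)) : Set (Fin ℓ → ℤ) :=
  {m | (∃ j, (m, j) ∈ T) ∧ ∀ m' : Fin ℓ → ℤ, ∀ j' : ℕ, (m', j') ∈ T → m' ≤ m → m' = m}

/-- The set of minimal elements of `T ⊆ ℤ^ℓ × ℕ` with respect to the product of the
componentwise partial order on `ℤ^ℓ` and the usual order on `ℕ`. -/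
def minElts {ℓ : ℕ} (T : Finset ((Fin ℓ → ℤ) × ℕ)) : Set ((Fin ℓ → ℤ) × ℕ) :=
  {mj | mj ∈ T ∧ ∀ mj' ∈ T, mj' ≤ mj → mj' = mj}

theorem Minimal.minimal_mem_of_forall_exists_le {α : Type*} [PartialOrder α] {s t : Set α}
    (ht : t.Finite) (hst : ∀ x, Minimal (· ∈ s) x → ∃ y ∈ t, y ≤ x)
    (hts : ∀ x, Minimal (· ∈ t) x → ∃ y ∈ s, y ≤ x) {x : α} (hx : Minimal (· ∈ s) x) :
    Minimal (· ∈ t) x := by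
  obtain ⟨y, hyt, hyx⟩ := hst x hx
  obtain ⟨z, hzy, hz⟩ := ht.isPWO.exists_le_minimal hyt
  obtain ⟨w, hws, hwz⟩ := hts z hz
  have hxw : x ≤ w := hx.2 hws (hwz.trans (hzy.trans hyx))
  rwa [le_antisymm (hzy.trans hyx) (hxw.trans hwz)] at hz

theorem minimal_mem_iff_of_forall_exists_le {α : Type*} [PartialOrder α] {s t : Set α}
    (hs : s.Finite) (ht : t.Finite) (hst : ∀ x, Minimal (· ∈ s) x → ∃ y ∈ t, y ≤ x)
    (hts : ∀ x, Minimal (· ∈ t) x → ∃ y ∈ s, y ≤ x) (x : α) :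
    Minimal (· ∈ s) x ↔ Minimal (· ∈ t) x :=
  ⟨Minimal.minimal_mem_of_forall_exists_le ht hst hts,
    Minimal.minimal_mem_of_forall_exists_le hs hts hst⟩

theorem iff_and_eq_of_ite_eq_ite {M : Type*} [Zero M] {p q : Prop} [Decidable p] [Decidable q]
    {a b : M} (ha : p → a ≠ 0) (hb : q → b ≠ 0)
    (h : (if p then a else 0) = if q then b else 0) : (p ↔ q) ∧ (p ∧ q → a = b) := by
  by_cases hp : p <;> by_cases hq : q <;> simp_all

section assocSeries

variable {ℓ : ℕ} {A : Type*} [CommRing A] {k : Fin ℓ → ℕ}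

theorem mem_minElts_iff {T : Finset ((Fin ℓ → ℤ) × ℕ)} {x : (Fin ℓ → ℤ) × ℕ} :
    x ∈ minElts T ↔ Minimal (· ∈ (T : Set ((Fin ℓ → ℤ) × ℕ))) x :=
  and_congr_right fun _ => forall₂_congr fun _ _ => imp_congr_right fun hyx => ⟨fun h => h.ge, le_antisymm hyx⟩

theorem mem_minPi_iff {T : Finset ((Fin ℓ → ℤ) × ℕ)} {m : Fin ℓ → ℤ} :
    m ∈ minPi T ↔ Minimal (· ∈ (T.image Prod.fst : Set (Fin ℓ → ℤ))) m := by
  simp only [minPi, Minimal, Finset.coe_image, Set.mem_image, Finset.mem_coe, Prod.exists,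
    exists_and_right, exists_eq_right, forall_exists_index]
  exact and_congr_right fun _ => forall_congr' fun _ => forall_congr' fun _ =>
    forall_congr' fun _ => imp_congr_right fun hle => ⟨fun h => h.ge, le_antisymm hle⟩

/-- The contribution of the term `c(x,τ) · x^{mj.1} (τ x^{-k})^{mj.2}` to the coefficient at
`bp`. -/
def seriesTerm (k : Fin ℓ → ℕ) (mj : (Fin ℓ → ℤ) × ℕ) (c : (Fin ℓ → ℕ) × ℕ → A)
    (bp : (Fin ℓ → ℤ) × ℕ) : A :=
  if mj.2 ≤ bp.2 ∧ ∀ i, mj.1 i + ((bp.2 - mj.2 : ℕ) : ℤ) * (k i : ℤ) ≤ bp.1 i then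
    c (fun i => (bp.1 i - mj.1 i - ((bp.2 - mj.2 : ℕ) : ℤ) * (k i : ℤ)).toNat, bp.2 - mj.2)
  else 0

theorem assocSeries_eq_sum_seriesTerm (T : Finset ((Fin ℓ → ℤ) × ℕ))
    (g : (Fin ℓ → ℤ) × ℕ → (Fin ℓ → ℕ) × ℕ → A) (bp : (Fin ℓ → ℤ) × ℕ) :
    assocSeries k T g bp = ∑ mj ∈ T, seriesTerm k mj (g mj) bp :=
  rfl

theorem seriesTerm_self (mj : (Fin ℓ → ℤ) × ℕ) (c : (Fin ℓ → ℕ) × ℕ → A) :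
    seriesTerm k mj c mj = c (0, 0) := by
  simp [seriesTerm, Pi.zero_def]

theorem le_of_seriesTerm_ne_zero {mj bp : (Fin ℓ → ℤ) × ℕ} {c : (Fin ℓ → ℕ) × ℕ → A}
    (h : seriesTerm k mj c bp ≠ 0) : mj ≤ bp := by
  unfold seriesTerm at h
  split_ifs at h with hc
  · refine ⟨fun i => ?_, hc.1⟩
    have := hc.2 i
    have : (0 : ℤ) ≤ ((bp.2 - mj.2 : ℕ) : ℤ) * (k i : ℤ) := by positivity
    linarith
  · exact absurd rfl h

theorem snd_eq_of_seriesTerm_ne_zero {i : Fin ℓ} (hk : 0 < k i) {m : Fin ℓ → ℤ} {j' j : ℕ}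
    {c : (Fin ℓ → ℕ) × ℕ → A} (h : seriesTerm k (m, j') c (m, j) ≠ 0) : j' = j := by
  unfold seriesTerm at h
  split_ifs at h with hc
  · have hle : ((j - j' : ℕ) : ℤ) * (k i : ℤ) ≤ 0 := by simpa using hc.2 i
    have : j - j' = 0 := by
      by_contra hne
      have : (0 : ℤ) < ((j - j' : ℕ) : ℤ) * (k i : ℤ) := by positivity
      linarith
    have hj : j' ≤ j := hc.1
    omega
  · exact absurd rfl h

variable {T : Finset ((Fin ℓ → ℤ) × ℕ)} {g : (Fin ℓ → ℤ) × ℕ → (Fin ℓ → ℕ) × ℕ → A}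

theorem exists_mem_le_of_assocSeries_ne_zero {bp : (Fin ℓ → ℤ) × ℕ}
    (h : assocSeries k T g bp ≠ 0) : ∃ mj ∈ T, mj ≤ bp := by
  obtain ⟨mj, hmj, hne⟩ := Finset.exists_ne_zero_of_sum_ne_zero h
  exact ⟨mj, hmj, le_of_seriesTerm_ne_zero hne⟩

theorem assocSeries_eq_ite {bp : (Fin ℓ → ℤ) × ℕ}
    (h : ∀ mj ∈ T, seriesTerm k mj (g mj) bp ≠ 0 → mj = bp) :
    assocSeries k T g bp = if bp ∈ T then g bp (0, 0) else 0 := by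
  rw [assocSeries_eq_sum_seriesTerm]
  split_ifs with hbp
  · rw [Finset.sum_eq_single_of_mem bp hbp fun mj hmj hne => not_imp_comm.1 (h mj hmj) hne,
      seriesTerm_self]
  · exact Finset.sum_eq_zero fun mj hmj => not_imp_comm.1 (h mj hmj) (ne_of_mem_of_not_mem hmj hbp)

theorem assocSeries_of_mem_minElts {x : (Fin ℓ → ℤ) × ℕ} (hx : x ∈ minElts T) :
    assocSeries k T g x = g x (0, 0) := by
  rw [assocSeries_eq_ite fun mj hmj hne => hx.2 mj hmj (le_of_seriesTerm_ne_zero hne), if_pos hx.1]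

theorem assocSeries_of_mem_minPi {i : Fin ℓ} (hk : 0 < k i) {m : Fin ℓ → ℤ} (hm : m ∈ minPi T)
    (j : ℕ) : assocSeries k T g (m, j) = if (m, j) ∈ T then g (m, j) (0, 0) else 0 := by
  refine assocSeries_eq_ite fun ⟨m', j'⟩ hmj hne => ?_
  obtain rfl : m' = m := hm.2 m' j' hmj (le_of_seriesTerm_ne_zero hne).1
  rw [snd_eq_of_seriesTerm_ne_zero hk hne]

end assocSeries

section primitive

variable {ℓ : ℕ} {A : Type*} [CommRing A] {k : Fin ℓ → ℕ} {T₁ T₂ : Finset ((Fin ℓ → ℤ) × ℕ)}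
  {g₁ g₂ : (Fin ℓ → ℤ) × ℕ → (Fin ℓ → ℕ) × ℕ → A}

theorem exists_mem_le_of_mem_minElts (hprim₁ : ∀ mj ∈ T₁, g₁ mj (0, 0) ≠ 0)
    (heq : assocSeries k T₁ g₁ = assocSeries k T₂ g₂) {x : (Fin ℓ → ℤ) × ℕ}
    (hx : x ∈ minElts T₁) : ∃ y ∈ T₂, y ≤ x := by
  refine exists_mem_le_of_assocSeries_ne_zero (k := k) (g := g₂) ?_
  rw [← heq, assocSeries_of_mem_minElts hx]
  exact hprim₁ x hx.1

theorem exists_mem_le_of_mem_minPi {i : Fin ℓ} (hk : 0 < k i)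
    (hprim₁ : ∀ mj ∈ T₁, g₁ mj (0, 0) ≠ 0) (heq : assocSeries k T₁ g₁ = assocSeries k T₂ g₂)
    {m : Fin ℓ → ℤ} (hm : m ∈ minPi T₁) : ∃ y ∈ T₂.image Prod.fst, y ≤ m := by
  obtain ⟨j, hj⟩ := hm.1
  obtain ⟨y, hy, hym⟩ : ∃ y ∈ T₂, y ≤ (m, j) := by
    refine exists_mem_le_of_assocSeries_ne_zero (k := k) (g := g₂) ?_
    rw [← heq, assocSeries_of_mem_minPi hk hm, if_pos hj]
    exact hprim₁ _ hj
  exact ⟨y.1, Finset.mem_image_of_mem _ hy, hym.1⟩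

theorem minElts_eq_of_assocSeries_eq (hprim₁ : ∀ mj ∈ T₁, g₁ mj (0, 0) ≠ 0)
    (hprim₂ : ∀ mj ∈ T₂, g₂ mj (0, 0) ≠ 0) (heq : assocSeries k T₁ g₁ = assocSeries k T₂ g₂) :
    minElts T₁ = minElts T₂ := by
  ext x
  simp only [mem_minElts_iff]
  exact minimal_mem_iff_of_forall_exists_le T₁.finite_toSet T₂.finite_toSet
    (fun x hx => exists_mem_le_of_mem_minElts hprim₁ heq (mem_minElts_iff.2 hx))
    (fun x hx => exists_mem_le_of_mem_minElts hprim₂ heq.symm (mem_minElts_iff.2 hx)) x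

theorem minPi_eq_of_assocSeries_eq {i : Fin ℓ} (hk : 0 < k i)
    (hprim₁ : ∀ mj ∈ T₁, g₁ mj (0, 0) ≠ 0) (hprim₂ : ∀ mj ∈ T₂, g₂ mj (0, 0) ≠ 0)
    (heq : assocSeries k T₁ g₁ = assocSeries k T₂ g₂) : minPi T₁ = minPi T₂ := by
  ext m
  simp only [mem_minPi_iff]
  exact minimal_mem_iff_of_forall_exists_le (T₁.image Prod.fst).finite_toSet
    (T₂.image Prod.fst).finite_toSet
    (fun m hm => exists_mem_le_of_mem_minPi hk hprim₁ heq (mem_minPi_iff.2 hm))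
    (fun m hm => exists_mem_le_of_mem_minPi hk hprim₂ heq.symm (mem_minPi_iff.2 hm)) m

end primitive

theorem primitiveExpression_leading_coeff_well_defined_general
    {ℓ₁ ℓ : ℕ} (h1 : 1 ≤ ℓ₁) (h2 : ℓ₁ ≤ ℓ)
    (k : Fin ℓ → ℕ)
    (hk1 : ∀ i : Fin ℓ, (i : ℕ) < ℓ₁ → 0 < k i)
    {A : Type*} [CommRing A]
    (T₁ T₂ : Finset ((Fin ℓ → ℤ) × ℕ))
    (g₁ g₂ : (Fin ℓ → ℤ) × ℕ → ((Fin ℓ → ℕ) × ℕ) → A)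
    (hprim₁ : ∀ mj ∈ T₁, g₁ mj (0, 0) ≠ 0)
    (hprim₂ : ∀ mj ∈ T₂, g₂ mj (0, 0) ≠ 0)
    (heq : ∀ bp, assocSeries k T₁ g₁ bp = assocSeries k T₂ g₂ bp) :
    (minPi T₁ = minPi T₂ ∧
      ∀ m ∈ minPi T₁, ∀ j : ℕ,
        ((m, j) ∈ T₁ ↔ (m, j) ∈ T₂) ∧
        ((m, j) ∈ T₁ ∧ (m, j) ∈ T₂ → g₁ (m, j) (0, 0) = g₂ (m, j) (0, 0))) ∧
    (minElts T₁ = minElts T₂ ∧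
      ∀ mj ∈ minElts T₁, g₁ mj (0, 0) = g₂ mj (0, 0)) := by
  have hk : 0 < k ⟨0, h1.trans h2⟩ := hk1 _ h1
  have hpi := minPi_eq_of_assocSeries_eq hk hprim₁ hprim₂ (funext heq)
  have helts := minElts_eq_of_assocSeries_eq hprim₁ hprim₂ (funext heq)
  refine ⟨⟨hpi, fun m hm j => ?_⟩, helts, fun mj hmj => ?_⟩
  · have hser := heq (m, j)
    rw [assocSeries_of_mem_minPi hk hm, assocSeries_of_mem_minPi hk (hpi ▸ hm)] at hser
    exact iff_and_eq_of_ite_eq_ite (hprim₁ _) (hprim₂ _) hser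
  · rw [← assocSeries_of_mem_minElts (k := k) (g := g₁) hmj,
      ← assocSeries_of_mem_minElts (k := k) (g := g₂) (helts ▸ hmj)]
    exact heq mj

/-- coefficient form of Corollary 14.5.2.50.  If two primitive expressions
`(T₁, g₁)` and `(T₂, g₂)` (i.e. `gᵢ_{m,j}(0,0) ≠ 0` for all `(m,j) ∈ Tᵢ`) have the same
associated series, then (i) `min(π(T₁)) = min(π(T₂))` and for `m` in this common set the
membership `(m,j) ∈ T₁ ↔ (m,j) ∈ T₂` holds for all `j`, with matching leading coefficients;
(ii) `min(T₁) = min(T₂)` with matching leading coefficients. -/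
theorem primitiveExpression_leading_coeff_well_defined
    {ℓ₁ ℓ : ℕ} (h1 : 1 ≤ ℓ₁) (h2 : ℓ₁ ≤ ℓ)
    (k : Fin ℓ → ℕ)
    (hk1 : ∀ i : Fin ℓ, (i : ℕ) < ℓ₁ → 0 < k i)
    (hk2 : ∀ i : Fin ℓ, ℓ₁ ≤ (i : ℕ) → k i = 0)
    {A : Type*} [CommRing A]
    (T₁ T₂ : Finset ((Fin ℓ → ℤ) × ℕ))
    (g₁ g₂ : (Fin ℓ → ℤ) × ℕ → ((Fin ℓ → ℕ) × ℕ) → A)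
    (hprim₁ : ∀ mj ∈ T₁, g₁ mj (0, 0) ≠ 0)
    (hprim₂ : ∀ mj ∈ T₂, g₂ mj (0, 0) ≠ 0)
    (heq : ∀ bp, assocSeries k T₁ g₁ bp = assocSeries k T₂ g₂ bp) :
    (minPi T₁ = minPi T₂ ∧
      ∀ m ∈ minPi T₁, ∀ j : ℕ,
        ((m, j) ∈ T₁ ↔ (m, j) ∈ T₂) ∧
        ((m, j) ∈ T₁ ∧ (m, j) ∈ T₂ → g₁ (m, j) (0, 0) = g₂ (m, j) (0, 0))) ∧
    (minElts T₁ = minElts T₂ ∧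
      ∀ mj ∈ minElts T₁, g₁ mj (0, 0) = g₂ mj (0, 0)) :=
  primitiveExpression_leading_coeff_well_defined_general h1 h2 k hk1 T₁ T₂ g₁ g₂ hprim₁ hprim₂ heq
end

section
/- Let s : ℤ^ℓ × ℕ → A be a series which is not identically zero and which has bounded pole order: there exists N ∈ ℕ such that s(b,p) = 0 unless b ≥ p·k − N·δ, where δ = (1,...,1) ∈ ℤ^ℓ. Then s admits a primitive expression: there exist a finite subset T ⊆ ℤ^ℓ × ℕ and, for each (m,j) ∈ T, a function g_{m,j} : ℕ^ℓ × ℕ → A with g_{m,j}(0,0) ≠ 0, such that the associated series Σ equals s. -/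
theorem Set.IsPWO.exists_finset_retraction {α : Type*} [PartialOrder α] {S : Set α}
    (hS : S.IsPWO) :
    ∃ (T : Finset α) (ρ : α → α), ↑T ⊆ S ∧ (∀ t ∈ T, ρ t = t) ∧ ∀ x ∈ S, ρ x ∈ T ∧ ρ x ≤ x := by
  classical
  have hfin : {x | Minimal (· ∈ S) x}.Finite :=
    (setOfPred_minimal_antichain _).finite_of_partiallyWellOrderedOn (hS.mono fun _ hx => hx.1)
  let ρ : α → α := fun x => if h : ∃ b ≤ x, Minimal (· ∈ S) b then h.choose else x
  have hρ : ∀ x ∈ S, ρ x ≤ x ∧ Minimal (· ∈ S) (ρ x) := fun x hx => by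
    have h := hS.exists_le_minimal hx
    simpa only [ρ, dif_pos h] using h.choose_spec
  refine ⟨hfin.toFinset, ρ, fun t ht => (hfin.mem_toFinset.1 ht).1, fun t ht => ?_,
    fun x hx => ⟨hfin.mem_toFinset.2 (hρ x hx).2, (hρ x hx).1⟩⟩
  have ht' : Minimal (· ∈ S) t := hfin.mem_toFinset.1 ht
  exact ht'.eq_of_le (hρ t ht'.1).2.1 (hρ t ht'.1).1

section Shear

variable {ℓ : ℕ} (k : Fin ℓ → ℕ)

def shear : ((Fin ℓ → ℤ) × ℕ) ≃ ((Fin ℓ → ℤ) × ℕ) where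
  toFun x := (fun i => x.1 i - x.2 * k i, x.2)
  invFun x := (fun i => x.1 i + x.2 * k i, x.2)
  left_inv x := by ext <;> simp
  right_inv x := by ext <;> simp

@[simp]
theorem shear_apply_snd (x : (Fin ℓ → ℤ) × ℕ) : (shear k x).2 = x.2 := rfl

theorem shear_le_shear_iff {u v : (Fin ℓ → ℤ) × ℕ} :
    shear k u ≤ shear k v ↔
      u.2 ≤ v.2 ∧ ∀ i, u.1 i + ((v.2 - u.2 : ℕ) : ℤ) * k i ≤ v.1 i := by
  simp only [shear, Equiv.coe_fn_mk, Prod.mk_le_mk, Pi.le_def]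
  refine and_comm.trans (and_congr_right fun h => forall_congr' fun i => ?_)
  rw [Nat.cast_sub h, sub_mul]
  constructor <;> intro <;> linarith

/- `(shear k).symm (shear k mj + aq)` is the exponent `(b, p)` of the monomial
`x^a τ^q · x^m (τ x^{-k})^j`, where `mj = (m, j)` and `aq = (a, q)`. -/
open Classical in
theorem assocSeries_shear {A : Type*} [CommRing A] (T : Finset ((Fin ℓ → ℤ) × ℕ))
    (G : (Fin ℓ → ℤ) × ℕ → (Fin ℓ → ℤ) × ℕ → A) (bp : (Fin ℓ → ℤ) × ℕ) :
    assocSeries k T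
        (fun mj aq => G mj ((shear k).symm
          (shear k mj + ((fun i => (aq.1 i : ℤ), aq.2) : (Fin ℓ → ℤ) × ℕ)))) bp =
      ∑ mj ∈ T, if shear k mj ≤ shear k bp then G mj bp else 0 := by
  refine Finset.sum_congr rfl fun mj _ => ?_
  simp only [← shear_le_shear_iff k]
  split_ifs with h
  · congr 1
    rw [Equiv.symm_apply_eq]
    obtain ⟨h1, h2⟩ := (shear_le_shear_iff k).1 h
    ext i
    · simp only [shear, Equiv.coe_fn_mk, Prod.fst_add, Pi.add_apply, Int.ofNat_toNat]
      rw [max_eq_left (by linarith [h2 i]), Nat.cast_sub h1]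
      ring
    · simp [h1]
  · rfl

theorem isPWO_shear_support {A : Type*} [Zero A] {s : (Fin ℓ → ℤ) × ℕ → A} {N : ℕ}
    (hN : ∀ b p, s (b, p) ≠ 0 → ∀ i, (p : ℤ) * k i - N ≤ b i) :
    {c | s ((shear k).symm c) ≠ 0}.IsPWO := by
  have hIci : (Set.Ici (-N : Fin ℓ → ℤ) ×ˢ (Set.univ : Set ℕ)).IsPWO := by
    refine .prod ?_ (Set.isPWO_of_wellQuasiOrderedLE _)
    rw [← Set.pi_univ_Ici]
    exact .pi fun i => (BddBelow.isWF bddBelow_Ici).isPWO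
  refine hIci.mono fun c hc => ⟨fun i => ?_, trivial⟩
  have := hN (fun i => c.1 i + c.2 * k i) c.2 hc i
  simp only [Pi.neg_apply, Pi.natCast_apply]
  linarith

end Shear

theorem exists_primitive_expression_general
    {ℓ : ℕ}
    (k : Fin ℓ → ℕ)
    {A : Type*} [CommRing A]
    (s : ((Fin ℓ → ℤ) × ℕ) → A)
    (hbound : ∃ N : ℕ, ∀ b : Fin ℓ → ℤ, ∀ p : ℕ,
      s (b, p) ≠ 0 → ∀ i : Fin ℓ, (p : ℤ) * (k i : ℤ) - (N : ℤ) ≤ b i) :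
    ∃ (T : Finset ((Fin ℓ → ℤ) × ℕ))
      (g : (Fin ℓ → ℤ) × ℕ → ((Fin ℓ → ℕ) × ℕ) → A),
      (∀ mj ∈ T, g mj (0, 0) ≠ 0) ∧ ∀ bp, assocSeries k T g bp = s bp := by
  obtain ⟨N, hN⟩ := hbound
  obtain ⟨T, ρ, hTs, hρT, hρs⟩ := (isPWO_shear_support k hN).exists_finset_retraction
  let G : (Fin ℓ → ℤ) × ℕ → (Fin ℓ → ℤ) × ℕ → A := fun mj x =>
    if ρ (shear k x) = shear k mj then s x else 0
  refine ⟨T.map (shear k).symm.toEmbedding,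
    fun mj aq => G mj ((shear k).symm (shear k mj + ((fun i => (aq.1 i : ℤ), aq.2) : _))),
    fun mj hmj => ?_, fun bp => ?_⟩
  · rw [Finset.mem_map_equiv, Equiv.symm_symm] at hmj
    simpa [G, hρT _ hmj, ← Pi.zero_def, Prod.mk_zero_zero] using hTs hmj
  · rw [assocSeries_shear, Finset.sum_map]
    simp only [Equiv.coe_toEmbedding, Equiv.apply_symm_apply]
    by_cases hbp : s bp = 0
    · simp [G, hbp]
    obtain ⟨hmem, hle⟩ := hρs (shear k bp) (by simpa using hbp)
    rw [Finset.sum_eq_single_of_mem _ hmem fun t _ ht => by simp [G, Ne.symm ht]]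
    simp [G, hle]

/-- coefficient form of Lemma 14.5.1.21.  A nonzero series
`s : ℤ^ℓ × ℕ → A` with bounded pole order (there is `N` such that `s (b, p) = 0` unless
`b ≥ p·k − N·δ`, `δ = (1,…,1)`) admits a primitive expression: there is a finite
`T ⊆ ℤ^ℓ × ℕ` and coefficient data `g` with all leading coefficients `g_{m,j}(0,0)`
nonzero whose associated series equals `s`. -/
theorem exists_primitive_expression
    {ℓ₁ ℓ : ℕ} (h1 : 1 ≤ ℓ₁) (h2 : ℓ₁ ≤ ℓ)
    (k : Fin ℓ → ℕ)
    (hk1 : ∀ i : Fin ℓ, (i : ℕ) < ℓ₁ → 0 < k i)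
    (hk2 : ∀ i : Fin ℓ, ℓ₁ ≤ (i : ℕ) → k i = 0)
    {A : Type*} [CommRing A]
    (s : ((Fin ℓ → ℤ) × ℕ) → A)
    (hs : ∃ bp, s bp ≠ 0)
    (hbound : ∃ N : ℕ, ∀ b : Fin ℓ → ℤ, ∀ p : ℕ,
      s (b, p) ≠ 0 → ∀ i : Fin ℓ, (p : ℤ) * (k i : ℤ) - (N : ℤ) ≤ b i) :
    ∃ (T : Finset ((Fin ℓ → ℤ) × ℕ))
      (g : (Fin ℓ → ℤ) × ℕ → ((Fin ℓ → ℕ) × ℕ) → A),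
      (∀ mj ∈ T, g mj (0, 0) ≠ 0) ∧ ∀ bp, assocSeries k T g bp = s bp :=
  exists_primitive_expression_general k s hbound
end

section
/- Let A be a commutative ring, r ∈ ℕ, and let h be a nonzero formal power series in A[[x_1,...,x_r]] (i.e. a nonzero element of MvPowerSeries over r variables with coefficients in A). Then there exist a finite set S ⊆ ℕ^r and, for each m ∈ S, a power series g_m ∈ A[[x_1,...,x_r]] whose constant coefficient is nonzero, such that h = ∑_{m∈S} x^m·g_m, where x^m denotes the monomial x_1^{m_1}···x_r^{m_r}. -/
/-!
By Dickson's lemma the support of `h` in `ℕ^r` has finitely many minimal elements and every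
point of the support dominates one of them. Sending each support point `n` to a chosen minimal
`c n ≤ n` splits `h` into finitely many pieces, the piece over `m` being supported in `m + ℕ^r`;
it is therefore `x^m` times a series whose constant coefficient is the coefficient of `h` at `m`,
which is nonzero.
-/

theorem Set.finite_setOf_minimal_mem {α : Type*} [PartialOrder α] [WellQuasiOrderedLE α]
    (s : Set α) : {m | Minimal (· ∈ s) m}.Finite :=
  (setOfPred_minimal_antichain _).finite_of_partiallyWellOrderedOn
    ((Set.isPWO_of_wellQuasiOrderedLE s).mono (setOfPred_minimal_subset _))

namespace MvPowerSeries

variable {σ R : Type*} [Semiring R]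

section fiberPart

variable {ι : Type*} [DecidableEq ι]

def fiberPart (c : (σ →₀ ℕ) → ι) (f : MvPowerSeries σ R) (i : ι) : MvPowerSeries σ R :=
  fun n => if c n = i then coeff n f else 0

theorem coeff_fiberPart (c : (σ →₀ ℕ) → ι) (f : MvPowerSeries σ R) (i : ι)
    (n : σ →₀ ℕ) : coeff n (fiberPart c f i) = if c n = i then coeff n f else 0 :=
  rfl

theorem coeff_fiberPart_ne_zero {c : (σ →₀ ℕ) → ι} {f : MvPowerSeries σ R} {i : ι}
    {n : σ →₀ ℕ} (hn : coeff n (fiberPart c f i) ≠ 0) : c n = i ∧ coeff n f ≠ 0 := by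
  rw [coeff_fiberPart] at hn
  split_ifs at hn with hcn
  exacts [⟨hcn, hn⟩, absurd rfl hn]

theorem sum_fiberPart {c : (σ →₀ ℕ) → ι} {f : MvPowerSeries σ R} {T : Finset ι}
    (hc : ∀ n, coeff n f ≠ 0 → c n ∈ T) : ∑ i ∈ T, fiberPart c f i = f := by
  ext n
  simp only [map_sum, coeff_fiberPart, Finset.sum_ite_eq]
  split_ifs with hn
  · rfl
  · exact (not_imp_comm.mp (hc n) hn).symm

end fiberPart

theorem exists_eq_monomial_one_mul {f : MvPowerSeries σ R} {m : σ →₀ ℕ}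
    (hf : ∀ n, coeff n f ≠ 0 → m ≤ n) :
    ∃ g, f = monomial m 1 * g ∧ constantCoeff g = coeff m f := by
  let g : MvPowerSeries σ R := fun k => coeff (m + k) f
  have coeff_g (k : σ →₀ ℕ) : coeff k g = coeff (m + k) f := rfl
  refine ⟨g, ?_, by rw [← coeff_zero_eq_constantCoeff_apply, coeff_g, add_zero]⟩
  ext n
  rw [coeff_monomial_mul, one_mul]
  split_ifs with hmn
  · rw [coeff_g, add_tsub_cancel_of_le hmn]
  · exact not_imp_comm.mp (hf n) hmn

end MvPowerSeries

theorem MvPowerSeries.exists_primitive_decomposition_general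
    {A : Type*} [CommRing A] (r : ℕ)
    (h : MvPowerSeries (Fin r) A) :
    ∃ (S : Finset (Fin r →₀ ℕ)) (g : (Fin r →₀ ℕ) → MvPowerSeries (Fin r) A),
      (∀ m ∈ S, MvPowerSeries.constantCoeff (g m) ≠ 0) ∧
      h = ∑ m ∈ S, MvPowerSeries.monomial m (1 : A) * g m := by
  classical
  set supp : Set (Fin r →₀ ℕ) := {n | coeff n h ≠ 0}
  have hfin := Set.finite_setOf_minimal_mem supp
  choose! c hc_le hc_min using fun n (hn : n ∈ supp) =>
    (Set.isPWO_of_wellQuasiOrderedLE supp).exists_le_minimal hn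
  have hc_fixed (m : Fin r →₀ ℕ) (hm : Minimal (· ∈ supp) m) : c m = m :=
    hm.eq_of_le (hc_min m hm.1).1 (hc_le m hm.1)
  choose g hg hg_const using fun m => exists_eq_monomial_one_mul (f := fiberPart c h m) (m := m)
    fun n hn => by
      obtain ⟨rfl, hsupp⟩ := coeff_fiberPart_ne_zero hn
      exact hc_le n hsupp
  refine ⟨hfin.toFinset, g, fun m hm => ?_, ?_⟩
  · rw [Set.Finite.mem_toFinset] at hm
    rw [hg_const, coeff_fiberPart, if_pos (hc_fixed m hm)]
    exact hm.1
  · calc h = ∑ m ∈ hfin.toFinset, fiberPart c h m :=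
          (sum_fiberPart fun n hn => hfin.mem_toFinset.mpr (hc_min n hn)).symm
      _ = _ := Finset.sum_congr rfl fun m _ => hg m

/-- primitive decomposition of a power series, the engine behind
Lemma 14.5.1.21.  A nonzero formal power series `h ∈ A[[x₁,…,x_r]]` can be written as a
finite sum `h = ∑_{m ∈ S} x^m · g_m` where each `g_m` is a power series with nonzero
constant coefficient. -/
theorem MvPowerSeries.exists_primitive_decomposition
    {A : Type*} [CommRing A] (r : ℕ)
    (h : MvPowerSeries (Fin r) A) (hne : h ≠ 0) :
    ∃ (S : Finset (Fin r →₀ ℕ)) (g : (Fin r →₀ ℕ) → MvPowerSeries (Fin r) A),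
      (∀ m ∈ S, MvPowerSeries.constantCoeff (g m) ≠ 0) ∧
      h = ∑ m ∈ S, MvPowerSeries.monomial m (1 : A) * g m :=
  MvPowerSeries.exists_primitive_decomposition_general r h
end

section
/- Let A be a commutative ring, fix integers ℓ₁, ℓ with 1 ≤ ℓ₁ ≤ ℓ and k ∈ ℕ^ℓ with k_i > 0 for 1 ≤ i ≤ ℓ₁ and k_i = 0 for ℓ₁ < i ≤ ℓ. Work in the formal power series ring R = A[[x_1,...,x_ℓ,τ]], and write x^a (for a ∈ ℕ^ℓ) for the monomial x_1^{a_1}···x_ℓ^{a_ℓ}. Let N ∈ ℕ and let s, h_0, h_1, ..., h_N ∈ R satisfy τ^{N+1}·s = ∑_{j=0}^{N} h_j·τ^j·x^{(N+1−j)·k}. Then the monomial x^k divides s in R, i.e. there exists t ∈ R with s = x^k·t. -/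
/-!
Every summand on the right-hand side carries the factor `x^{(N+1-j)k}` with `N + 1 - j ≥ 1`,
so `x^k` divides `τ^{N+1} s`. Since `τ^{N+1}` and `x^k` are monomials in disjoint sets of
variables, the coefficient of `m` in `s` is that of `m + (N+1)·e_τ` in `τ^{N+1} s`, and the
coefficient criterion for divisibility by a monomial transfers from `τ^{N+1} s` to `s`.
-/

namespace MvPowerSeries

variable {σ R : Type*}

theorem monomial_one_dvd_iff [Semiring R] {d : σ →₀ ℕ} {φ : MvPowerSeries σ R} :
    monomial d (1 : R) ∣ φ ↔ ∀ m, ¬d ≤ m → coeff m φ = 0 := by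
  constructor
  · rintro ⟨ψ, rfl⟩ m hm
    rw [coeff_monomial_mul, if_neg hm]
  · intro h
    refine ⟨show MvPowerSeries σ R from fun m => coeff (m + d) φ, ?_⟩
    ext m
    rw [coeff_monomial_mul]
    split_ifs with hd
    · rw [one_mul]
      exact congrArg (coeff · φ) (tsub_add_cancel_of_le hd).symm
    · exact h m hd

theorem monomial_one_dvd_of_dvd_monomial_one_mul [Semiring R] {d e : σ →₀ ℕ}
    {φ : MvPowerSeries σ R} (hde : Disjoint d.support e.support)
    (h : monomial d (1 : R) ∣ monomial e 1 * φ) : monomial d (1 : R) ∣ φ := by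
  rw [monomial_one_dvd_iff] at h ⊢
  intro m hm
  rw [← one_mul (coeff m φ), ← coeff_add_monomial_mul]
  refine h _ fun hle => hm fun i => ?_
  by_cases hi : i ∈ e.support
  · rw [Finsupp.notMem_support_iff.mp (Finset.disjoint_right.mp hde hi)]
    exact Nat.zero_le _
  · simpa [Finsupp.notMem_support_iff.mp hi] using hle i

theorem prod_X_pow_eq_monomial [CommSemiring R] {ι : Type*} (t : Finset ι) (f : ι → σ)
    (k : ι → ℕ) :
    ∏ i ∈ t, (X (f i) : MvPowerSeries σ R) ^ k i =
      monomial (∑ i ∈ t, Finsupp.single (f i) (k i)) 1 := by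
  induction t using Finset.cons_induction with
  | empty => simp [monomial_zero_one]
  | cons a t ha ih =>
    rw [Finset.prod_cons, Finset.sum_cons, ih, X_pow_eq, monomial_mul_monomial, one_mul]

end MvPowerSeries

open MvPowerSeries

theorem kontsevich_pole_order_lemma_general
    {A : Type*} [CommRing A]
    (ℓ : ℕ)
    (k : Fin ℓ → ℕ)
    (N : ℕ)
    (s : MvPowerSeries (Option (Fin ℓ)) A)
    (h : ℕ → MvPowerSeries (Option (Fin ℓ)) A)
    (heq : (MvPowerSeries.X (none : Option (Fin ℓ))) ^ (N + 1) * s =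
      ∑ j ∈ Finset.range (N + 1),
        h j * (MvPowerSeries.X (none : Option (Fin ℓ))) ^ j *
          ∏ i : Fin ℓ, (MvPowerSeries.X (some i : Option (Fin ℓ))) ^ ((N + 1 - j) * k i)) :
    ∃ t : MvPowerSeries (Option (Fin ℓ)) A,
      s = (∏ i : Fin ℓ, (MvPowerSeries.X (some i : Option (Fin ℓ))) ^ (k i)) * t := by
  have hsummand : ∀ j ∈ Finset.range (N + 1),
      (∏ i : Fin ℓ, (X (some i) : MvPowerSeries (Option (Fin ℓ)) A) ^ k i) ∣
        h j * X none ^ j * ∏ i : Fin ℓ, X (some i) ^ ((N + 1 - j) * k i) := by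
    intro j hj
    simp_rw [mul_comm (N + 1 - j), pow_mul, Finset.prod_pow]
    exact (dvd_pow_self _ (by simp at hj; omega)).mul_left _
  have hdvd := heq ▸ Finset.dvd_sum hsummand
  rw [prod_X_pow_eq_monomial, X_pow_eq] at hdvd
  rw [prod_X_pow_eq_monomial]
  refine monomial_one_dvd_of_dvd_monomial_one_mul ?_ hdvd
  refine Finset.disjoint_of_subset_right Finsupp.support_single_subset ?_
  simp

/-- formal power series form of Lemma 14.5.21.1.  In the formal power
series ring `R = A[[x₁,…,x_ℓ,τ]]` (realized as multivariate power series in the variables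
indexed by `Option (Fin ℓ)`, with `τ` the variable `X none` and `x_i = X (some i)`), suppose
`τ^{N+1} · s = ∑_{j=0}^{N} h_j · τ^j · x^{(N+1−j)·k}`.  Then `x^k` divides `s`. -/
theorem kontsevich_pole_order_lemma
    {A : Type*} [CommRing A]
    (ℓ₁ ℓ : ℕ) (h1 : 1 ≤ ℓ₁) (h2 : ℓ₁ ≤ ℓ)
    (k : Fin ℓ → ℕ)
    (hk1 : ∀ i : Fin ℓ, (i : ℕ) < ℓ₁ → 0 < k i)
    (hk2 : ∀ i : Fin ℓ, ℓ₁ ≤ (i : ℕ) → k i = 0)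
    (N : ℕ)
    (s : MvPowerSeries (Option (Fin ℓ)) A)
    (h : ℕ → MvPowerSeries (Option (Fin ℓ)) A)
    (heq : (MvPowerSeries.X (none : Option (Fin ℓ))) ^ (N + 1) * s =
      ∑ j ∈ Finset.range (N + 1),
        h j * (MvPowerSeries.X (none : Option (Fin ℓ))) ^ j *
          ∏ i : Fin ℓ, (MvPowerSeries.X (some i : Option (Fin ℓ))) ^ ((N + 1 - j) * k i)) :
    ∃ t : MvPowerSeries (Option (Fin ℓ)) A,
      s = (∏ i : Fin ℓ, (MvPowerSeries.X (some i : Option (Fin ℓ))) ^ (k i)) * t :=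
  kontsevich_pole_order_lemma_general ℓ k N s h heq
end

section
/- Let R be a commutative ring, M̃ an R-module, d : M̃ → M̃ an R-linear map, and F_0 ⊆ F_1 ⊆ F_2 ⊆ ... an increasing chain of R-submodules of M̃ such that: (a) ⋃_{j≥0} F_j = M̃; (b) F_{j+1} = F_j + d(F_j) for every j ≥ 0; (c) for every j ≥ 1, if s ∈ F_j and d(s) ∈ F_j then s ∈ F_{j−1} (i.e. the maps F_j/F_{j−1} → F_{j+1}/F_j induced by d are injective). Set M' := { s ∈ F_0 : d(s) ∈ F_0 }. Then: (i) every s ∈ M̃ with d(s) = 0 lies in M'; (ii) F_0 ∩ d(M̃) = d(M'); (iii) M̃ = F_0 + d(M̃). Consequently, the inclusion of the two-term complex [M' → F_0] (with differential d) into [M̃ → M̃] is a quasi-isomorphism: it induces isomorphisms ker(d : M' → F_0) ≅ ker(d : M̃ → M̃) and F_0/d(M') ≅ M̃/d(M̃). -/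
/-- abstract filtration lemma behind Lemmas 14.5.14.10, 14.5.1.100,
14.5.1.101, 14.5.15.110, 14.5.15.120 and 14.5.15.121.  Let `d : M̃ → M̃` be linear and let
`F₀ ⊆ F₁ ⊆ ⋯` be an exhaustive chain of submodules with `F_{j+1} = F_j + d(F_j)` such that
`d` induces injections `F_j/F_{j-1} → F_{j+1}/F_j` for `j ≥ 1`.  With
`M' = {s ∈ F₀ | d s ∈ F₀}`, (i) every `d`-closed element lies in `M'`;
(ii) `F₀ ∩ d(M̃) = d(M')`; (iii) `M̃ = F₀ + d(M̃)`; consequently the inclusion of the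
two-term complex `[M' → F₀]` into `[M̃ → M̃]` is a quasi-isomorphism (the kernels agree by
(i), and the inclusion induces an isomorphism `F₀ / d(M') ≃ M̃ / d(M̃)`). -/
theorem filtration_two_term_quasi_iso
    {R M : Type*} [CommRing R] [AddCommGroup M] [Module R M]
    (d : M →ₗ[R] M) (F : ℕ → Submodule R M)
    (hmono : Monotone F)
    (hexh : ∀ x : M, ∃ j : ℕ, x ∈ F j)
    (hstep : ∀ j : ℕ, F (j + 1) = F j ⊔ (F j).map d)
    (hinj : ∀ j : ℕ, 1 ≤ j → ∀ s ∈ F j, d s ∈ F j → s ∈ F (j - 1)) :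
    (∀ s : M, d s = 0 → s ∈ F 0 ⊓ (F 0).comap d) ∧
    (F 0 ⊓ LinearMap.range d = Submodule.map d (F 0 ⊓ (F 0).comap d)) ∧
    (F 0 ⊔ LinearMap.range d = ⊤) ∧
    (∃ e : (↥(F 0) ⧸
        (Submodule.map d (F 0 ⊓ (F 0).comap d)).comap (F 0).subtype) ≃ₗ[R]
        (M ⧸ LinearMap.range d),
      ∀ y : F 0, e (Submodule.Quotient.mk y) = Submodule.Quotient.mk (y : M)) := by
  -- descent: if s ∈ F j and d s ∈ F 0, then s ∈ F 0
  have descend : ∀ j : ℕ, ∀ s : M, s ∈ F j → d s ∈ F 0 → s ∈ F 0 := by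
    intro j
    induction j with
    | zero => intro s hs _; exact hs
    | succ n ih =>
      intro s hs hds
      apply ih
      · have := hinj (n + 1) (Nat.succ_le_succ (Nat.zero_le n)) s hs
          (hmono (Nat.zero_le (n + 1)) hds)
        simpa using this
      · exact hds
  have hi : ∀ s : M, d s = 0 → s ∈ F 0 ⊓ (F 0).comap d := by
    intro s hs
    obtain ⟨j, hj⟩ := hexh s
    have h0 : s ∈ F 0 := descend j s hj (by simp [hs])
    exact ⟨h0, by simp [Submodule.mem_comap, hs]⟩
  have hii : F 0 ⊓ LinearMap.range d = Submodule.map d (F 0 ⊓ (F 0).comap d) := by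
    apply le_antisymm
    · rintro x ⟨hx0, s, rfl⟩
      obtain ⟨j, hj⟩ := hexh s
      have hs0 : s ∈ F 0 := descend j s hj hx0
      exact ⟨s, ⟨hs0, hx0⟩, rfl⟩
    · rintro x ⟨s, ⟨_, hs⟩, rfl⟩
      exact ⟨hs, s, rfl⟩
  have hiii : F 0 ⊔ LinearMap.range d = ⊤ := by
    have key : ∀ j : ℕ, F j ≤ F 0 ⊔ LinearMap.range d := by
      intro j
      induction j with
      | zero => exact le_sup_left
      | succ n ih =>
        rw [hstep n]
        apply sup_le ih
        rintro x ⟨s, _, rfl⟩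
        exact Submodule.mem_sup_right ⟨s, rfl⟩
    rw [eq_top_iff]
    intro x _
    obtain ⟨j, hj⟩ := hexh x
    exact key j hj
  refine ⟨hi, hii, hiii, ?_⟩
  set f : ↥(F 0) →ₗ[R] M ⧸ LinearMap.range d :=
    (LinearMap.range d).mkQ ∘ₗ (F 0).subtype with hf
  have hker : LinearMap.ker f =
      (Submodule.map d (F 0 ⊓ (F 0).comap d)).comap (F 0).subtype := by
    ext y
    simp only [hf, LinearMap.mem_ker, LinearMap.comp_apply, Submodule.mkQ_apply,
      Submodule.Quotient.mk_eq_zero, Submodule.mem_comap, Submodule.subtype_apply]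
    constructor
    · intro hy
      rw [← hii]; exact ⟨y.2, hy⟩
    · intro hy
      have : (y : M) ∈ F 0 ⊓ LinearMap.range d := by rw [hii]; exact hy
      exact this.2
  have hsurj : Function.Surjective f := by
    intro z
    obtain ⟨x, rfl⟩ := Submodule.mkQ_surjective _ z
    have hx : x ∈ F 0 ⊔ LinearMap.range d := hiii ▸ Submodule.mem_top
    obtain ⟨a, ha, b, ⟨s, rfl⟩, rfl⟩ := Submodule.mem_sup.mp hx
    refine ⟨⟨a, ha⟩, ?_⟩
    simp only [hf, LinearMap.comp_apply, Submodule.mkQ_apply, Submodule.subtype_apply]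
    rw [Submodule.Quotient.eq]
    exact ⟨-s, by rw [map_neg]; abel⟩
  refine ⟨(Submodule.quotEquivOfEq _ _ hker.symm).trans
    (f.quotKerEquivOfSurjective hsurj), ?_⟩
  intro y
  simp only [LinearEquiv.trans_apply, Submodule.quotEquivOfEq_mk]
  simp [LinearMap.quotKerEquivOfSurjective, LinearMap.quotKerEquivRange, hf]
end

section
/- Let K be a cochain complex of R-modules over a commutative ring R (with terms K^k, k ∈ ℤ, and differential d), and let G_0 ⊆ G_1 ⊆ G_2 ⊆ ... be an increasing family of subcomplexes of K (so each G_N^k is a submodule of K^k with d(G_N^k) ⊆ G_N^{k+1} and G_N^k ⊆ G_{N+1}^k) which is exhaustive: ⋃_N G_N^k = K^k for every k. Assume that for every N ≥ 1, every k, and every ω ∈ G_N^k, there exists κ ∈ G_{N−1}^{k−1} with ω − d(κ) ∈ G_{N−1}^k. Then the inclusion of complexes G_0 ↪ K is a quasi-isomorphism, i.e. it induces isomorphisms H^k(G_0) → H^k(K) for all k. -/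
/-- telescope lemma underlying Propositions 14.4.24.10 and 14.5.2.211.
Let `K` be a cochain complex of `R`-modules and `G₀ ⊆ G₁ ⊆ ⋯` an exhaustive increasing
family of subcomplexes.  If for every `N ≥ 1` and every `ω ∈ G_N^k` there is
`κ ∈ G_{N-1}^{k-1}` with `ω − dκ ∈ G_{N-1}^k`, then the inclusion `G₀ ↪ K` is a
quasi-isomorphism: for every degree, the induced map on cohomology is injective (a cocycle
of `G₀` which is a coboundary in `K` is a coboundary in `G₀`) and surjective (every cocycle
of `K` is a cocycle of `G₀` plus a coboundary of `K`). -/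
theorem telescope_quasi_iso
    {R : Type*} [CommRing R]
    (K : ℤ → Type*) [∀ k, AddCommGroup (K k)] [∀ k, Module R (K k)]
    (d : ∀ k : ℤ, K k →ₗ[R] K (k + 1))
    (hdd : ∀ k : ℤ, ∀ x : K k, d (k + 1) (d k x) = 0)
    (G : ℕ → ∀ k : ℤ, Submodule R (K k))
    (hsub : ∀ N : ℕ, ∀ k : ℤ, (G N k).map (d k) ≤ G N (k + 1))
    (hincr : ∀ N : ℕ, ∀ k : ℤ, G N k ≤ G (N + 1) k)
    (hexh : ∀ k : ℤ, ∀ x : K k, ∃ N : ℕ, x ∈ G N k)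
    (hdesc : ∀ N : ℕ, ∀ k : ℤ, ∀ ω ∈ G (N + 1) (k + 1),
      ∃ κ ∈ G N k, ω - d k κ ∈ G N (k + 1)) :
    ∀ k : ℤ,
      (∀ z ∈ G 0 (k + 1), d (k + 1) z = 0 →
        (∃ u : K k, z = d k u) → ∃ u ∈ G 0 k, z = d k u) ∧
      (∀ z : K (k + 1), d (k + 1) z = 0 →
        ∃ w ∈ G 0 (k + 1), d (k + 1) w = 0 ∧ ∃ u : K k, z = w + d k u) := by
  -- One-step descent, reformulated at an arbitrary degree `j`.
  have hdesc' : ∀ N : ℕ, ∀ j : ℤ, ∀ u ∈ G (N + 1) j, ∃ u' ∈ G N j, d j u' = d j u := by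
    intro N j
    obtain ⟨i, rfl⟩ : ∃ i : ℤ, i + 1 = j := ⟨j - 1, by ring⟩
    intro u hu
    obtain ⟨κ, hκ, hκ'⟩ := hdesc N i u hu
    refine ⟨u - d i κ, hκ', ?_⟩
    rw [map_sub, hdd i κ, sub_zero]
  -- Telescoping descent to `G 0` preserving the differential.
  have B : ∀ N : ℕ, ∀ j : ℤ, ∀ u ∈ G N j, ∃ u' ∈ G 0 j, d j u' = d j u := by
    intro N
    induction N with
    | zero => exact fun j u hu => ⟨u, hu, rfl⟩
    | succ N ih =>
      intro j u hu
      obtain ⟨u₁, hu₁, hd₁⟩ := hdesc' N j u hu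
      obtain ⟨u', hu', hd'⟩ := ih j u₁ hu₁
      exact ⟨u', hu', hd'.trans hd₁⟩
  -- Telescoping descent modulo coboundaries of `K`.
  have A : ∀ N : ℕ, ∀ k : ℤ, ∀ z ∈ G N (k + 1),
      ∃ w ∈ G 0 (k + 1), ∃ u : K k, z = w + d k u := by
    intro N
    induction N with
    | zero => exact fun k z hz => ⟨z, hz, 0, by rw [map_zero, add_zero]⟩
    | succ N ih =>
      intro k z hz
      obtain ⟨κ, hκ, hκ'⟩ := hdesc N k z hz
      obtain ⟨w, hw, u, hu⟩ := ih k (z - d k κ) hκ'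
      refine ⟨w, hw, κ + u, ?_⟩
      rw [map_add]
      have := sub_eq_iff_eq_add.mp hu
      rw [this]; abel
  intro k
  constructor
  · rintro z hz hdz ⟨u, hu⟩
    obtain ⟨N, hN⟩ := hexh k u
    obtain ⟨u', hu', hd'⟩ := B N k u hN
    exact ⟨u', hu', by rw [hu, ← hd']⟩
  · intro z hdz
    obtain ⟨N, hN⟩ := hexh (k + 1) z
    obtain ⟨w, hw, u, hu⟩ := A N k z hN
    refine ⟨w, hw, ?_, u, hu⟩
    have : d (k + 1) z = d (k + 1) w + d (k + 1) (d k u) := by rw [hu, map_add]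
    rw [hdz, hdd k u, add_zero] at this
    exact this.symm
end

section
/- Assume in addition that A is a ℚ-algebra. Let S ⊆ ℤ^ℓ × ℕ be a finite subset and suppose given, for each (m,j) ∈ S: an element c_{m,j} ∈ A, an integer K_{m,j} ∈ ℕ, rational numbers C_{m,j,r} for 0 ≤ r ≤ K_{m,j} with C_{m,j,0} ≠ 0, and functions h_{m,j,r} : ℕ^ℓ × ℕ → A with h_{m,j,r}(0,0) = C_{m,j,r}·c_{m,j}. Suppose the total series vanishes identically: for every (b,p) ∈ ℤ^ℓ × ℕ, ∑_{(m,j)∈S} ∑_{r=0}^{K_{m,j}} h_{m,j,r}(b − m − (p−j−r)·k, p−j−r) = 0, where a summand is read as 0 unless p − j − r ≥ 0 and b − m − (p−j−r)·k ∈ ℕ^ℓ. Then: (i) c_{m,j} = 0 for every m ∈ min(π(S)) and every j with (m,j) ∈ S; (ii) c_{m,j} = 0 for every (m,j) ∈ min(S). -/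
/-!
Read the vanishing condition at the exponent `(m, j)` itself. A term `(m', j', r)` can reach
`x^m τ^j` only if `m' ≤ m` and `j' + r ≤ j`. If `(m, j)` is minimal in `S`, only `r = 0` at
`(m, j)` survives, leaving `C_{m,j,0} c_{m,j} = 0`. If instead `m` is minimal in `π(S)`, then
`m' = m`, and because `k` has a positive entry the factor `x^{-(j - j' - r) k}` forces
`j' + r = j`. The surviving terms are `C_{m,j',r} c_{m,j'}` with `j' ≤ j`, and induction on `j`
kills all of them except `C_{m,j,0} c_{m,j}`.
-/

open Finset

theorem Finset.sum_sum_eq_single_of_mem {ι κ M : Type*} [AddCommMonoid M] {s : Finset ι}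
    {t : ι → Finset κ} {f : ι → κ → M} {x₀ : ι} {y₀ : κ} (hx₀ : x₀ ∈ s) (hy₀ : y₀ ∈ t x₀)
    (hf : ∀ x ∈ s, ∀ y ∈ t x, (x, y) ≠ (x₀, y₀) → f x y = 0) :
    ∑ x ∈ s, ∑ y ∈ t x, f x y = f x₀ y₀ := by
  rw [sum_eq_single_of_mem x₀ hx₀ fun x hx hne =>
        sum_eq_zero fun y hy => hf x hx y hy fun heq => hne (Prod.ext_iff.mp heq).1,
      sum_eq_single_of_mem y₀ hy₀ fun y hy hne =>
        hf x₀ hx₀ y hy fun heq => hne (Prod.ext_iff.mp heq).2]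

section ShiftedCoeff

variable {ℓ : ℕ} (k : Fin ℓ → ℕ) {A : Type*} [Zero A]

/-- The coefficient of `x^b τ^p` in `g(x, τ) · x^m · (τ x^{-k})^{j + r}`, where `g` is the
coefficient function of a power series in `(x, τ)`. -/
def shiftedCoeff (g : (Fin ℓ → ℕ) × ℕ → A) (m : Fin ℓ → ℤ) (j r : ℕ) (b : Fin ℓ → ℤ)
    (p : ℕ) : A :=
  if j + r ≤ p ∧ ∀ i, m i + ((p - j - r : ℕ) : ℤ) * (k i : ℤ) ≤ b i then
    g (fun i => (b i - m i - ((p - j - r : ℕ) : ℤ) * (k i : ℤ)).toNat, p - j - r)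
  else 0

variable {k}

theorem shiftedCoeff_self (g : (Fin ℓ → ℕ) × ℕ → A) (m : Fin ℓ → ℤ) (j r : ℕ) :
    shiftedCoeff k g m j r m (j + r) = g (0, 0) := by
  simp [shiftedCoeff, Pi.zero_def]

theorem le_and_add_le_of_shiftedCoeff_ne_zero {g : (Fin ℓ → ℕ) × ℕ → A} {m b : Fin ℓ → ℤ}
    {j r p : ℕ} (hne : shiftedCoeff k g m j r b p ≠ 0) : m ≤ b ∧ j + r ≤ p := by
  by_contra hle
  refine hne (if_neg fun ⟨hp, hb⟩ => hle ⟨fun i => ?_, hp⟩)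
  exact le_trans (le_add_of_nonneg_right (by positivity)) (hb i)

theorem add_eq_of_shiftedCoeff_ne_zero {i : Fin ℓ} (hk : 0 < k i)
    {g : (Fin ℓ → ℕ) × ℕ → A} {b : Fin ℓ → ℤ} {j r p : ℕ}
    (hne : shiftedCoeff k g b j r b p ≠ 0) : j + r = p := by
  by_contra hjp
  refine hne (if_neg fun ⟨hp, hb⟩ => ?_)
  have hpos : 0 < ((p - j - r : ℕ) : ℤ) * (k i : ℤ) := by
    have : 0 < p - j - r := by omega
    positivity
  linarith [hb i]

end ShiftedCoeff

section SeriesCoeff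

variable {ℓ : ℕ} (k : Fin ℓ → ℕ) {A : Type*} [CommRing A] [Algebra ℚ A]

/-- The coefficient of `x^b τ^p` in `∑_{(m,j) ∈ S} ∑_{r ≤ K_{m,j}} h_{m,j,r}(x,τ) x^m (τ x^{-k})^{j+r}`. -/
def seriesCoeff (S : Finset ((Fin ℓ → ℤ) × ℕ)) (K : (Fin ℓ → ℤ) × ℕ → ℕ)
    (h : (Fin ℓ → ℤ) × ℕ → ℕ → (Fin ℓ → ℕ) × ℕ → A) (b : Fin ℓ → ℤ) (p : ℕ) : A :=
  ∑ mj ∈ S, ∑ r ∈ range (K mj + 1), shiftedCoeff k (h mj r) mj.1 mj.2 r b p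

variable {k} {S : Finset ((Fin ℓ → ℤ) × ℕ)} {c : (Fin ℓ → ℤ) × ℕ → A}
  {K : (Fin ℓ → ℤ) × ℕ → ℕ} {C : (Fin ℓ → ℤ) × ℕ → ℕ → ℚ}
  {h : (Fin ℓ → ℤ) × ℕ → ℕ → (Fin ℓ → ℕ) × ℕ → A}

theorem eq_zero_of_algebraMap_mul_eq_zero {q : ℚ} (hq : q ≠ 0) {a : A}
    (hqa : algebraMap ℚ A q * a = 0) : a = 0 :=
  ((IsUnit.mk0 q hq).map (algebraMap ℚ A)).mul_right_eq_zero.mp hqa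

theorem seriesCoeff_eq_of_forall_eq_zero {mj : (Fin ℓ → ℤ) × ℕ} (hmj : mj ∈ S)
    (hlead : h mj 0 (0, 0) = algebraMap ℚ A (C mj 0) * c mj)
    (hother : ∀ mj' ∈ S, ∀ r ≤ K mj', (mj', r) ≠ (mj, 0) →
      shiftedCoeff k (h mj' r) mj'.1 mj'.2 r mj.1 mj.2 = 0) :
    seriesCoeff k S K h mj.1 mj.2 = algebraMap ℚ A (C mj 0) * c mj := by
  rw [seriesCoeff, sum_sum_eq_single_of_mem hmj (by simp)
    fun mj' hmj' r hr => hother mj' hmj' r (Nat.lt_succ_iff.mp (mem_range.mp hr))]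
  simpa using (shiftedCoeff_self (h mj 0) mj.1 mj.2 0).trans hlead

variable (hC0 : ∀ mj ∈ S, C mj 0 ≠ 0)
  (hlead : ∀ mj ∈ S, ∀ r : ℕ, r ≤ K mj → h mj r (0, 0) = algebraMap ℚ A (C mj r) * c mj)
  (hzero : seriesCoeff k S K h = 0)
include hC0 hlead hzero

theorem coeff_eq_zero_of_isMin {mj : (Fin ℓ → ℤ) × ℕ} (hmj : mj ∈ S)
    (hmin : ∀ mj' ∈ S, mj' ≤ mj → mj' = mj) : c mj = 0 := by
  refine eq_zero_of_algebraMap_mul_eq_zero (hC0 mj hmj) ?_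
  rw [← seriesCoeff_eq_of_forall_eq_zero hmj (hlead mj hmj 0 (Nat.zero_le _)), hzero, Pi.zero_apply,
    Pi.zero_apply]
  intro mj' hmj' r _ hne
  by_contra hcoeff
  obtain ⟨hm, hjr⟩ := le_and_add_le_of_shiftedCoeff_ne_zero hcoeff
  have hmj'_eq : mj' = mj := hmin mj' hmj' ⟨hm, by omega⟩
  exact hne (Prod.ext hmj'_eq (by rw [hmj'_eq] at hjr; omega))

theorem coeff_eq_zero_of_isMin_fst {i : Fin ℓ} (hk : 0 < k i) {m : Fin ℓ → ℤ}
    (hmin : ∀ m' : Fin ℓ → ℤ, ∀ j' : ℕ, (m', j') ∈ S → m' ≤ m → m' = m) (j : ℕ)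
    (hmj : (m, j) ∈ S) : c (m, j) = 0 := by
  induction j using Nat.strong_induction_on with
  | _ j ih =>
  refine eq_zero_of_algebraMap_mul_eq_zero (hC0 _ hmj) ?_
  rw [← seriesCoeff_eq_of_forall_eq_zero hmj (hlead _ hmj 0 (Nat.zero_le _)), hzero, Pi.zero_apply,
    Pi.zero_apply]
  rintro ⟨m', j'⟩ hmj' r hr hne
  by_contra hcoeff
  have hm : m' = m := hmin m' j' hmj' (le_and_add_le_of_shiftedCoeff_ne_zero hcoeff).1
  subst hm
  have hjr : j' + r = j := add_eq_of_shiftedCoeff_ne_zero hk hcoeff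
  have hr0 : r ≠ 0 := by rintro rfl; exact hne (by simp [← hjr])
  apply hcoeff
  rw [← hjr, shiftedCoeff_self, hlead _ hmj' r hr, ih j' (by omega) hmj', mul_zero]

end SeriesCoeff

theorem leading_coeff_vanishes_at_minimal_indices_general
    {ℓ₁ ℓ : ℕ} (h1 : 1 ≤ ℓ₁) (h2 : ℓ₁ ≤ ℓ)
    (k : Fin ℓ → ℕ)
    (hk1 : ∀ i : Fin ℓ, (i : ℕ) < ℓ₁ → 0 < k i)
    {A : Type*} [CommRing A] [Algebra ℚ A]
    (S : Finset ((Fin ℓ → ℤ) × ℕ))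
    (c : (Fin ℓ → ℤ) × ℕ → A)
    (K : (Fin ℓ → ℤ) × ℕ → ℕ)
    (C : (Fin ℓ → ℤ) × ℕ → ℕ → ℚ)
    (h : (Fin ℓ → ℤ) × ℕ → ℕ → ((Fin ℓ → ℕ) × ℕ) → A)
    (hC0 : ∀ mj ∈ S, C mj 0 ≠ 0)
    (hlead : ∀ mj ∈ S, ∀ r : ℕ, r ≤ K mj →
      h mj r (0, 0) = algebraMap ℚ A (C mj r) * c mj)
    (hzero : ∀ b : Fin ℓ → ℤ, ∀ p : ℕ,
      (∑ mj ∈ S, ∑ r ∈ Finset.range (K mj + 1),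
        if mj.2 + r ≤ p ∧
            ∀ i, mj.1 i + ((p - mj.2 - r : ℕ) : ℤ) * (k i : ℤ) ≤ b i then
          h mj r (fun i => (b i - mj.1 i - ((p - mj.2 - r : ℕ) : ℤ) * (k i : ℤ)).toNat,
                   p - mj.2 - r)
        else 0) = 0) :
    (∀ m : Fin ℓ → ℤ, (∃ j, (m, j) ∈ S) →
      (∀ m' : Fin ℓ → ℤ, ∀ j' : ℕ, (m', j') ∈ S → m' ≤ m → m' = m) →
      ∀ j : ℕ, (m, j) ∈ S → c (m, j) = 0) ∧
    (∀ mj ∈ S, (∀ mj' ∈ S, mj' ≤ mj → mj' = mj) → c mj = 0) := by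
  have hseries : seriesCoeff k S K h = 0 := funext fun b => funext (hzero b)
  have hk : 0 < k ⟨0, by omega⟩ := hk1 ⟨0, by omega⟩ h1
  exact ⟨fun m _ hmin => coeff_eq_zero_of_isMin_fst hC0 hlead hseries hk hmin,
    fun mj hmj hmin => coeff_eq_zero_of_isMin hC0 hlead hseries hmj hmin⟩

/-- coefficient form of the unnumbered lemma of Section 2.3.3 and of
Lemma 14.5.14.100.  Let `A` be a `ℚ`-algebra.  Suppose given a finite `S ⊆ ℤ^ℓ × ℕ`, and
for each `(m,j) ∈ S`, data `c_{m,j} ∈ A`, `K_{m,j} ∈ ℕ`, rationals `C_{m,j,r}` with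
`C_{m,j,0} ≠ 0`, and coefficient functions `h_{m,j,r} : ℕ^ℓ × ℕ → A` with
`h_{m,j,r}(0,0) = C_{m,j,r} · c_{m,j}`.  If the series associated to
`∑_{(m,j) ∈ S} ∑_{r=0}^{K_{m,j}} h_{m,j,r}(x,τ) x^m (τ x^{-k})^{j+r}` vanishes identically,
then `c_{m,j} = 0` for every `m ∈ min(π(S))` and every `j` with `(m,j) ∈ S`, and
`c_{m,j} = 0` for every `(m,j) ∈ min(S)`. -/
theorem leading_coeff_vanishes_at_minimal_indices
    {ℓ₁ ℓ : ℕ} (h1 : 1 ≤ ℓ₁) (h2 : ℓ₁ ≤ ℓ)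
    (k : Fin ℓ → ℕ)
    (hk1 : ∀ i : Fin ℓ, (i : ℕ) < ℓ₁ → 0 < k i)
    (hk2 : ∀ i : Fin ℓ, ℓ₁ ≤ (i : ℕ) → k i = 0)
    {A : Type*} [CommRing A] [Algebra ℚ A]
    (S : Finset ((Fin ℓ → ℤ) × ℕ))
    (c : (Fin ℓ → ℤ) × ℕ → A)
    (K : (Fin ℓ → ℤ) × ℕ → ℕ)
    (C : (Fin ℓ → ℤ) × ℕ → ℕ → ℚ)
    (h : (Fin ℓ → ℤ) × ℕ → ℕ → ((Fin ℓ → ℕ) × ℕ) → A)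
    (hC0 : ∀ mj ∈ S, C mj 0 ≠ 0)
    (hlead : ∀ mj ∈ S, ∀ r : ℕ, r ≤ K mj →
      h mj r (0, 0) = algebraMap ℚ A (C mj r) * c mj)
    (hzero : ∀ b : Fin ℓ → ℤ, ∀ p : ℕ,
      (∑ mj ∈ S, ∑ r ∈ Finset.range (K mj + 1),
        if mj.2 + r ≤ p ∧
            ∀ i, mj.1 i + ((p - mj.2 - r : ℕ) : ℤ) * (k i : ℤ) ≤ b i then
          h mj r (fun i => (b i - mj.1 i - ((p - mj.2 - r : ℕ) : ℤ) * (k i : ℤ)).toNat,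
                   p - mj.2 - r)
        else 0) = 0) :
    (∀ m : Fin ℓ → ℤ, (∃ j, (m, j) ∈ S) →
      (∀ m' : Fin ℓ → ℤ, ∀ j' : ℕ, (m', j') ∈ S → m' ≤ m → m' = m) →
      ∀ j : ℕ, (m, j) ∈ S → c (m, j) = 0) ∧
    (∀ mj ∈ S, (∀ mj' ∈ S, mj' ≤ mj → mj' = mj) → c mj = 0) :=
  leading_coeff_vanishes_at_minimal_indices_general h1 h2 k hk1 S c K C h hC0 hlead hzero
end
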